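/- arXiv:1503.00914 — 6 statements merged into one kernel-verified Lean document; each statement's English description precedes it below -/
import Mathlib

section
/- For all n ≥ 1 and p ≥ 1, the number of primitive p-ascent sequences of length n avoiding the pattern 10 equals C(p+n-2, n-1). -/
/-- Number of ascents of a sequence: indices j with a_j < a_{j+1}. -/
def ascN (l : List ℕ) : ℕ := (l.zip l.tail).countP (fun q => decide (q.1 < q.2))

/-- `a` is a p-ascent sequence: nonempty, starts with 0, and each later entry
is at most `p` plus the number of ascents of the preceding prefix. -/
def IsPAsc (p : ℕ) (a : List ℕ) : Prop :=
  a.head? = some 0 ∧ ∀ i : Fin a.length, 1 ≤ i.val → a.get i ≤ p + ascN (a.take i.val)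

def Avoids01 (a : List ℕ) : Prop := ∀ i j : Fin a.length, i < j → ¬ a.get i < a.get j

def Avoids10 (a : List ℕ) : Prop := ∀ i j : Fin a.length, i < j → ¬ a.get j < a.get i

def Avoids012 (a : List ℕ) : Prop :=
  ∀ i j k : Fin a.length, i < j → j < k → ¬ (a.get i < a.get j ∧ a.get j < a.get k)

/-- primitive: no two equal consecutive letters -/
def Primitive (a : List ℕ) : Prop := a.Chain' (· ≠ ·)

/-! Avoiding `10` makes a sequence weakly increasing, and primitivity makes it strictly
increasing. A strictly increasing sequence `0 = a₀ < a₁ < ⋯ < aₘ` has exactly `i - 1` ascents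
before position `i`, so the p-ascent condition reads `aᵢ ≤ p + i - 1`; by strict monotonicity
this is implied by its last instance `aₘ ≤ p + m - 1`. Hence such sequences are the sets
`{a₁, …, aₘ} ⊆ {1, …, p + m - 1}` of size `m = n - 1`, of which there are `C(p + n - 2, n - 1)`. -/

lemma List.SortedLT.getElem_add_le {l : List ℕ} (hl : l.SortedLT) {i k : ℕ}
    (h : i + k < l.length) : l[i] + k ≤ l[i + k] := by
  induction k with
  | zero => rfl
  | succ k ih =>
    have hstep : l[i + k] < l[i + (k + 1)] := hl.getElem_lt_getElem_iff.2 (Nat.lt_succ_self _)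
    have := ih (by omega)
    omega

lemma List.SortedLT.forall_getElem_le_add_iff {l : List ℕ} (hl : l.SortedLT) (p : ℕ) :
    (∀ i (hi : i < l.length), l[i] ≤ p + i) ↔ ∀ x ∈ l, x < p + l.length := by
  constructor
  · intro h x hx
    obtain ⟨i, hi, rfl⟩ := List.mem_iff_getElem.1 hx
    have := h i hi
    omega
  · intro h i hi
    have hlast := h _ (List.getElem_mem (n := i + (l.length - 1 - i)) (by omega))
    have := hl.getElem_add_le (i := i) (k := l.length - 1 - i) (by omega)
    omega

lemma List.SortedLT.take {α : Type*} [Preorder α] {l : List α} (hl : l.SortedLT) (n : ℕ) : (l.take n).SortedLT :=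
  List.sortedLT_iff_isChain.2 ((List.sortedLT_iff_isChain.1 hl).take n)

lemma sortedLT_cons_zero_iff {t : List ℕ} :
    (0 :: t).SortedLT ↔ t.SortedLT ∧ ∀ x ∈ t, 0 < x := by
  simp only [List.sortedLT_iff_pairwise, List.pairwise_cons]
  exact and_comm

lemma avoids10_iff_sortedLE {a : List ℕ} : Avoids10 a ↔ a.SortedLE := by
  simp only [Avoids10, List.SortedLE, monotone_iff_forall_lt, not_lt]

lemma primitive_iff_isChain {a : List ℕ} : Primitive a ↔ a.IsChain (· ≠ ·) := Iff.rfl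

lemma primitive_and_avoids10_iff_sortedLT {a : List ℕ} :
    Primitive a ∧ Avoids10 a ↔ a.SortedLT := by
  simp only [primitive_iff_isChain, avoids10_iff_sortedLE, List.sortedLE_iff_isChain,
    List.sortedLT_iff_isChain, List.isChain_iff_getElem, ← forall_and, lt_iff_le_and_ne, and_comm]

lemma ascN_eq_length_sub_one_of_sortedLT : ∀ {l : List ℕ}, l.SortedLT → ascN l = l.length - 1
  | [], _ => rfl
  | [_], _ => rfl
  | a :: b :: t, h => by
    obtain ⟨hab, hbt⟩ := List.isChain_cons_cons.1 (List.sortedLT_iff_isChain.1 h)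
    have ih := ascN_eq_length_sub_one_of_sortedLT (List.sortedLT_iff_isChain.2 hbt)
    simp only [ascN, List.tail_cons, List.zip_cons_cons, List.countP_cons,
      List.length_cons] at ih ⊢
    simp [hab]
    omega

lemma isPAsc_cons_zero_iff {p : ℕ} {t : List ℕ} (ht : (0 :: t).SortedLT) :
    IsPAsc p (0 :: t) ↔ ∀ i (hi : i < t.length), t[i] ≤ p + i := by
  have hasc : ∀ i ≤ t.length, ascN ((0 :: t).take (i + 1)) = i := fun i hi => by
    rw [ascN_eq_length_sub_one_of_sortedLT (ht.take _), List.length_take, List.length_cons]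
    omega
  simp only [IsPAsc, List.head?_cons, true_and, List.length_cons, Fin.forall_fin_succ,
    Fin.forall_iff, List.get_eq_getElem, Fin.val_succ, List.getElem_cons_succ,
    Nat.le_add_left, true_implies, Fin.val_zero, Nat.le_zero, one_ne_zero, false_implies,
    true_and]
  exact forall₂_congr fun i hi => by rw [hasc i hi.le]

lemma isPAsc_primitive_avoids10_cons_zero_iff {p : ℕ} {t : List ℕ} :
    IsPAsc p (0 :: t) ∧ Primitive (0 :: t) ∧ Avoids10 (0 :: t) ↔
      (0 :: t).SortedLT ∧ ∀ x ∈ t, x < p + t.length := by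
  rw [primitive_and_avoids10_iff_sortedLT]
  constructor
  · rintro ⟨hP, hs⟩
    exact ⟨hs, ((sortedLT_cons_zero_iff.1 hs).1.forall_getElem_le_add_iff p).1
      ((isPAsc_cons_zero_iff hs).1 hP)⟩
  · rintro ⟨hs, hbound⟩
    exact ⟨(isPAsc_cons_zero_iff hs).2
      (((sortedLT_cons_zero_iff.1 hs).1.forall_getElem_le_add_iff p).2 hbound), hs⟩

open Finset in
lemma setOf_isPAsc_primitive_avoids10_eq_image (p m : ℕ) :
    {a : List ℕ | a.length = m + 1 ∧ IsPAsc p a ∧ Primitive a ∧ Avoids10 a} =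
      (fun s : Finset ℕ => 0 :: s.sort) '' (powersetCard m (Ioo 0 (p + m)) : Set (Finset ℕ)) := by
  ext a
  simp only [Set.mem_ofPred_eq, Set.mem_image, mem_coe, mem_powersetCard]
  constructor
  · rintro ⟨hlen, hP, hrest⟩
    obtain ⟨t, rfl⟩ : ∃ t, a = 0 :: t := List.head?_eq_some_iff.1 hP.1
    obtain ⟨hs, hbound⟩ := isPAsc_primitive_avoids10_cons_zero_iff.1 ⟨hP, hrest⟩
    obtain ⟨ht, hpos⟩ := sortedLT_cons_zero_iff.1 hs
    replace hlen : t.length = m := by simpa using hlen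
    refine ⟨t.toFinset, ⟨fun x hx => ?_, ?_⟩, ?_⟩
    · rw [List.mem_toFinset] at hx
      exact mem_Ioo.2 ⟨hpos x hx, hlen ▸ hbound x hx⟩
    · rw [List.toFinset_card_of_nodup ht.nodup, hlen]
    · rw [(List.toFinset_sort _ ht.nodup).2 (List.sortedLE_iff_pairwise.1 ht.sortedLE)]
  · rintro ⟨s, ⟨hsub, hcard⟩, rfl⟩
    have hmem : ∀ x ∈ s.sort, x ∈ Ioo 0 (p + m) := fun x hx => hsub ((mem_sort _).1 hx)
    refine ⟨by simp [hcard], isPAsc_primitive_avoids10_cons_zero_iff.2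
      ⟨sortedLT_cons_zero_iff.2 ⟨sortedLT_sort s, fun x hx => (mem_Ioo.1 (hmem x hx)).1⟩,
        fun x hx => ?_⟩⟩
    simpa [hcard] using (mem_Ioo.1 (hmem x hx)).2

lemma cons_zero_sort_injective : Function.Injective fun s : Finset ℕ => 0 :: s.sort := by
  intro s t h
  simpa using congrArg (fun l => l.tail.toFinset) h

theorem stmt2_general (n p : ℕ) (hn : 1 ≤ n) :
    Set.ncard {a : List ℕ | a.length = n ∧ IsPAsc p a ∧ Primitive a ∧ Avoids10 a} =
      (p + n - 2).choose (n - 1) := by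
  obtain ⟨m, rfl⟩ : ∃ m, n = m + 1 := ⟨n - 1, by omega⟩
  rw [setOf_isPAsc_primitive_avoids10_eq_image,
    Set.ncard_image_of_injective _ cons_zero_sort_injective, Set.ncard_coe_finset,
    Finset.card_powersetCard, Nat.card_Ioo]
  congr 1

theorem stmt2 (n p : ℕ) (hn : 1 ≤ n) (hp : 1 ≤ p) :
    Set.ncard {a : List ℕ | a.length = n ∧ IsPAsc p a ∧ Primitive a ∧ Avoids10 a} =
      (p + n - 2).choose (n - 1) :=
  stmt2_general n p hn
end

section
/- A sequence (a_1,...,a_n) of nonnegative integers is a primitive p-ascent sequence avoiding the pattern 10 if and only if 0 = a_1 < a_2 < ... < a_n and a_i ≤ p + i - 2 for all 2 ≤ i ≤ n. -/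
/-! A primitive sequence avoiding `10` is strictly increasing, so each of its prefixes of
length `i` has exactly `i - 1` ascents, and the `p`-ascent bound becomes `a_i ≤ p + i - 2`
(with 1-based indices). -/

lemma ascN_eq_length_sub_one_of_chain_lt {l : List ℕ} (h : l.IsChain (· < ·)) :
    ascN l = l.length - 1 := by
  induction l with
  | nil => rfl
  | cons x t ih =>
    cases t with
    | nil => rfl
    | cons y s =>
      obtain ⟨hxy, hs⟩ := List.isChain_cons_cons.mp h
      have ih := ih hs
      simp only [ascN, List.zip, List.tail] at ih ⊢
      simp [hxy, ih]

lemma ascN_take_of_chain_lt {a : List ℕ} (h : a.IsChain (· < ·)) (i : Fin a.length) :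
    ascN (a.take i.val) = i.val - 1 := by
  rw [ascN_eq_length_sub_one_of_chain_lt (h.sublist (List.take_sublist _ _)), List.length_take,
    min_eq_left i.isLt.le]

lemma chain_lt_of_primitive_of_avoids10 {a : List ℕ} (hprim : Primitive a) (hav : Avoids10 a) :
    a.IsChain (· < ·) := by
  rw [Primitive, List.Chain', List.isChain_iff_getElem] at hprim
  rw [List.isChain_iff_getElem]
  intro i hi
  have hle : a[i] ≤ a[i + 1] := not_lt.mp (hav ⟨i, by omega⟩ ⟨i + 1, hi⟩ (by simp))
  exact lt_of_le_of_ne hle (hprim i hi)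

lemma avoids10_of_chain_lt {a : List ℕ} (h : a.IsChain (· < ·)) : Avoids10 a :=
  fun i j hij => (List.pairwise_iff_get.mp (List.isChain_iff_pairwise.mp h) i j hij).asymm

lemma isPAsc_iff_of_chain_lt (p : ℕ) {a : List ℕ} (h : a.IsChain (· < ·)) :
    IsPAsc p a ↔
      a.head? = some 0 ∧ ∀ i : Fin a.length, 1 ≤ i.val → a.get i ≤ p + i.val - 1 := by
  refine and_congr_right fun _ => forall_congr' fun i => imp_congr_right fun hi => ?_
  rw [ascN_take_of_chain_lt h, ← Nat.add_sub_assoc hi]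

theorem stmt3_general (p : ℕ) (a : List ℕ) :
    (IsPAsc p a ∧ Primitive a ∧ Avoids10 a) ↔
      (a.head? = some 0 ∧ a.Chain' (· < ·) ∧
        ∀ i : Fin a.length, 1 ≤ i.val → a.get i ≤ p + i.val - 1) := by
  constructor
  · rintro ⟨hasc, hprim, hav⟩
    have hchain := chain_lt_of_primitive_of_avoids10 hprim hav
    obtain ⟨h0, hbound⟩ := (isPAsc_iff_of_chain_lt p hchain).mp hasc
    exact ⟨h0, hchain, hbound⟩
  · rintro ⟨h0, hchain, hbound⟩
    exact ⟨(isPAsc_iff_of_chain_lt p hchain).mpr ⟨h0, hbound⟩,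
      hchain.imp fun _ _ => ne_of_lt, avoids10_of_chain_lt hchain⟩

theorem stmt3 (p : ℕ) (hp : 1 ≤ p) (a : List ℕ) (ha : a ≠ []) :
    (IsPAsc p a ∧ Primitive a ∧ Avoids10 a) ↔
      (a.head? = some 0 ∧ a.Chain' (· < ·) ∧
        ∀ i : Fin a.length, 1 ≤ i.val → a.get i ≤ p + i.val - 1) :=
  stmt3_general p a
end

section
/- For all n ≥ 1 and p ≥ 1, the number of p-ascent sequences of length n avoiding the pattern 10 equals the sum over s from 0 to n-1 of C(n-1, s) · C(p+s-1, s). -/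
/-! A weakly increasing sequence starting at `0` is the list of partial sums of its list of
differences `d`. For such a sequence, the p-ascent condition says that the slack
`p + (ascents so far) - (current value)` never becomes negative: it starts at `p`, each step
`v` costs `v`, and each positive step refunds one unit. Splitting on the first step, the number
`c m q` of difference lists of length `m` with initial slack `q` satisfies
`c (m + 1) q = c m q + ∑ e ∈ [1, q], c m e`, and `c m (q + 1) = ∑ s, C(m, s) * C(q + s, s)`
follows from Pascal's rule and the hockey-stick identity. -/

open Finset

theorem ascN_cons_cons (x y : ℕ) (t : List ℕ) :
    ascN (x :: y :: t) = ascN (y :: t) + if x < y then 1 else 0 := by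
  simp [ascN, List.countP_cons]

-- `IsPAsc p a` is `a.head? = some 0 ∧ AscentBounded p a`; freeing the budget `q` lets the
-- condition be peeled off one entry at a time.
def AscentBounded (q : ℕ) (l : List ℕ) : Prop :=
  ∀ i : Fin l.length, 1 ≤ i.val → l.get i ≤ q + ascN (l.take i.val)

theorem ascentBounded_singleton (q x : ℕ) : AscentBounded q [x] :=
  fun i h => absurd i.isLt (by simp only [List.length_singleton]; omega)

theorem ascentBounded_cons_cons (q x y : ℕ) (t : List ℕ) :
    AscentBounded q (x :: y :: t) ↔
      y ≤ q ∧ AscentBounded (q + if x < y then 1 else 0) (y :: t) := by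
  simp only [AscentBounded, List.length_cons, Fin.forall_fin_succ, Fin.val_zero, Fin.val_succ,
    List.take_succ_cons, ascN_cons_cons]
  simp [show ∀ z, ascN [z] = 0 from fun _ => rfl, add_assoc, add_comm (ascN _)]

theorem avoids10_iff_pairwise (a : List ℕ) : Avoids10 a ↔ a.Pairwise (· ≤ ·) := by
  simp only [Avoids10, List.pairwise_iff_get, not_lt]

theorem scanl_add_injective (x : ℕ) : Function.Injective (List.scanl (· + ·) x) := by
  intro d e h
  induction d generalizing x e with
  | nil => cases e with
    | nil => rfl
    | cons => simp at h
  | cons v d ih =>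
    cases e with
    | nil => simp at h
    | cons w e =>
      simp only [List.scanl_cons, List.cons.injEq, true_and] at h
      have hvw : v = w := by simpa using congrArg List.head? h
      subst hvw
      rw [ih (x + v) h]

theorem exists_scanl_add_eq_iff {x : ℕ} {a : List ℕ} :
    (∃ d : List ℕ, d.scanl (· + ·) x = a) ↔
      a.head? = some x ∧ a.Pairwise (· ≤ ·) := by
  rw [← List.isChain_iff_pairwise]
  induction a generalizing x with
  | nil => simp
  | cons y t ih =>
    cases t with
    | nil => exact ⟨fun _ => by simp_all, fun ⟨h, _⟩ => ⟨[], by simp_all⟩⟩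
    | cons z t =>
      simp only [List.head?_cons, Option.some.injEq, List.isChain_cons_cons]
      constructor
      · rintro ⟨_ | ⟨v, d⟩, h⟩
        · simp at h
        · simp only [List.scanl_cons, List.cons.injEq] at h
          obtain ⟨rfl, h⟩ := h
          obtain ⟨hz, hchain⟩ := ih.mp ⟨d, h⟩
          simp only [List.head?_cons, Option.some.injEq] at hz
          exact ⟨rfl, by omega, hchain⟩
      · rintro ⟨rfl, hyz, hchain⟩
        obtain ⟨d, hd⟩ := ih.mpr ⟨rfl, hchain⟩
        exact ⟨(z - y) :: d, by rw [List.scanl_cons, Nat.add_sub_cancel' hyz, hd]⟩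

-- `q` is the slack `p + (ascents so far) - (current value)` of the partial-sum sequence.
def FitsBudget : ℕ → List ℕ → Prop
  | _, [] => True
  | q, v :: d => v ≤ q ∧ FitsBudget (q - v + if 0 < v then 1 else 0) d

theorem ascentBounded_scanl_add_iff (x q : ℕ) (d : List ℕ) :
    AscentBounded (x + q) (d.scanl (· + ·) x) ↔ FitsBudget q d := by
  induction d generalizing x q with
  | nil => simp [FitsBudget, ascentBounded_singleton]
  | cons v d ih =>
    obtain ⟨t, ht⟩ : ∃ t, d.scanl (· + ·) (x + v) = (x + v) :: t :=
      ⟨_, List.eq_cons_of_mem_head? List.head?_scanl⟩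
    rw [List.scanl_cons, ht, ascentBounded_cons_cons, ← ht, FitsBudget, ← ih (x + v),
      Nat.add_le_add_iff_left]
    refine and_congr_right fun hvq => ?_
    rw [show x + q + (if x < x + v then 1 else 0) = x + v + (q - v + if 0 < v then 1 else 0) by
      split_ifs <;> omega]

def fittingLists : ℕ → ℕ → Finset (List ℕ)
  | 0, _ => {[]}
  | m + 1, q => (range (q + 1)).biUnion fun v =>
      (fittingLists m (q - v + if 0 < v then 1 else 0)).image (v :: ·)

theorem mem_fittingLists {m q : ℕ} {d : List ℕ} :
    d ∈ fittingLists m q ↔ d.length = m ∧ FitsBudget q d := by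
  induction m generalizing q d with
  | zero => cases d <;> simp [fittingLists, FitsBudget]
  | succ m ih =>
    cases d with
    | nil => simp [fittingLists]
    | cons v d => simp [fittingLists, FitsBudget, ih]; tauto

theorem card_fittingLists_succ (m q : ℕ) :
    #(fittingLists (m + 1) q) =
      #(fittingLists m q) + ∑ v ∈ range q, #(fittingLists m (q - v)) := by
  rw [fittingLists, card_biUnion, sum_range_succ', add_comm]
  · simp only [card_image_of_injective _ List.cons_injective]
    congr 1
    refine sum_congr rfl fun v hv => ?_
    have hvq := mem_range.mp hv
    rw [if_pos v.succ_pos, show q - (v + 1) + 1 = q - v by omega]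
  · intro v _ w _ hvw
    simp only [Function.onFun, disjoint_left, mem_image]
    rintro _ ⟨d, -, rfl⟩ ⟨e, -, he⟩
    exact hvw (List.cons.inj he).1.symm

def binomSum (m q : ℕ) : ℕ := ∑ s ∈ range (m + 1), m.choose s * (q + s).choose s

theorem binomSum_succ_left (m q : ℕ) :
    binomSum (m + 1) q = binomSum m q + ∑ e ∈ range (q + 1), binomSum m e := by
  have hockey : ∑ e ∈ range (q + 1), binomSum m e =
      ∑ s ∈ range (m + 1), m.choose s * (q + s + 1).choose (s + 1) := by
    simp only [binomSum]
    rw [sum_comm]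
    simp only [← mul_sum, Nat.sum_range_add_choose]
  rw [hockey, binomSum, binomSum]
  simpa [add_right_comm, add_assoc] using
    sum_choose_succ_mul (R := ℕ) (fun s _ => (q + s).choose s) m

theorem card_fittingLists (m q : ℕ) : #(fittingLists m (q + 1)) = binomSum m q := by
  induction m generalizing q with
  | zero => simp [fittingLists, binomSum]
  | succ m ih =>
    rw [card_fittingLists_succ, binomSum_succ_left, ih, ← sum_range_reflect]
    congr 1
    refine sum_congr rfl fun j hj => ?_
    have hjq := mem_range.mp hj
    rw [← ih, show q + 1 - (q + 1 - 1 - j) = j + 1 by omega]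

theorem setOf_isPAsc_avoids10_eq_image (m p : ℕ) :
    {a : List ℕ | a.length = m + 1 ∧ IsPAsc p a ∧ Avoids10 a} =
      (fittingLists m p).image (List.scanl (· + ·) 0) := by
  ext a
  simp only [Set.mem_ofPred_eq, coe_image, Set.mem_image, mem_coe, mem_fittingLists,
    avoids10_iff_pairwise, IsPAsc]
  constructor
  · rintro ⟨hlen, ⟨hhead, hbound⟩, hsorted⟩
    obtain ⟨d, rfl⟩ := exists_scanl_add_eq_iff.mpr ⟨hhead, hsorted⟩
    rw [List.length_scanl, Nat.add_right_cancel_iff] at hlen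
    exact ⟨d, ⟨hlen, (ascentBounded_scanl_add_iff 0 p d).mp (by rwa [zero_add])⟩, rfl⟩
  · rintro ⟨d, ⟨hlen, hfits⟩, rfl⟩
    obtain ⟨hhead, hsorted⟩ := exists_scanl_add_eq_iff.mp ⟨d, rfl⟩
    have hbound := (ascentBounded_scanl_add_iff 0 p d).mpr hfits
    rw [zero_add] at hbound
    exact ⟨by rw [List.length_scanl, hlen], ⟨hhead, hbound⟩, hsorted⟩

theorem stmt4 (n p : ℕ) (hn : 1 ≤ n) (hp : 1 ≤ p) :
    Set.ncard {a : List ℕ | a.length = n ∧ IsPAsc p a ∧ Avoids10 a} =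
      ∑ s ∈ Finset.range n, (n - 1).choose s * (p + s - 1).choose s := by
  obtain ⟨m, rfl⟩ := Nat.exists_eq_add_of_le' hn
  obtain ⟨q, rfl⟩ := Nat.exists_eq_add_of_le' hp
  rw [setOf_isPAsc_avoids10_eq_image, Set.ncard_coe_finset,
    card_image_of_injective _ (scanl_add_injective 0), card_fittingLists]
  simp [binomSum, add_right_comm]
end

section
/- If a = (a_1,...,a_n) is a p-ascent sequence avoiding the pattern 00 (i.e., all entries are distinct), then n - 1 ≤ max(a_1,...,a_n) ≤ n + p - 2. -/
lemma ascN_le_length_sub_one (l : List ℕ) : ascN l ≤ l.length - 1 :=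
  (List.countP_le_length).trans (by simp)

lemma length_le_foldr_max_succ_of_nodup {l : List ℕ} (hl : l.Nodup) :
    l.length ≤ l.foldr max 0 + 1 := by
  have hsub : l.toFinset ⊆ Finset.range (l.foldr max 0 + 1) := fun x hx =>
    Finset.mem_range_succ_iff.mpr (List.le_max_of_le (List.mem_toFinset.mp hx) le_rfl)
  simpa [List.toFinset_card_of_nodup hl] using Finset.card_le_card hsub

namespace IsPAsc

variable {p : ℕ} {a : List ℕ}

lemma get_zero (h : IsPAsc p a) (i : Fin a.length) (hi : i.val = 0) : a.get i = 0 := by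
  obtain ⟨i, hlt⟩ := i
  obtain rfl : i = 0 := hi
  cases a with
  | nil => simp at hlt
  | cons x l => simpa [IsPAsc] using h.1

lemma get_le (h : IsPAsc p a) (i : Fin a.length) : a.get i ≤ a.length + p - 2 := by
  rcases Nat.eq_zero_or_pos i.val with hi | hi
  · rw [h.get_zero i hi]
    exact Nat.zero_le _
  · have hasc := ascN_le_length_sub_one (a.take i.val)
    have hentry := h.2 i hi
    simp only [List.length_take] at hasc
    omega

end IsPAsc

theorem stmt5_general (p : ℕ) (a : List ℕ) (h : IsPAsc p a) (hd : a.Nodup) :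
    a.length - 1 ≤ a.foldr max 0 ∧ a.foldr max 0 ≤ a.length + p - 2 := by
  refine ⟨by have := length_le_foldr_max_succ_of_nodup hd; omega, ?_⟩
  refine List.max_le_of_forall_le _ _ fun x hx => ?_
  obtain ⟨i, rfl⟩ := List.get_of_mem hx
  exact h.get_le i

theorem stmt5 (p : ℕ) (hp : 1 ≤ p) (a : List ℕ) (h : IsPAsc p a) (hd : a.Nodup) :
    a.length - 1 ≤ a.foldr max 0 ∧ a.foldr max 0 ≤ a.length + p - 2 :=
  stmt5_general p a h hd
end

section
/- If a = (a_1,...,a_n) is a p-ascent sequence that avoids the pattern 012, then a_i ≤ p for all i. -/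
lemma exists_getElem_lt_getElem_succ_of_ascN_pos {l : List ℕ} (hl : 0 < ascN l) :
    ∃ j, ∃ h : j + 1 < l.length, l[j] < l[j + 1] := by
  obtain ⟨q, hq, hlt⟩ := List.countP_pos_iff.mp hl
  obtain ⟨j, hj, rfl⟩ := List.getElem_of_mem hq
  simp only [List.length_zip, List.length_tail, lt_min_iff] at hj
  refine ⟨j, by omega, ?_⟩
  simpa [List.getElem_zip, List.getElem_tail] using hlt

/-- An entry above `p` forces an ascent `a_j < a_{j+1}` before it; by induction `a_{j+1} ≤ p`,
so `a_j, a_{j+1}` and that entry form a `012` pattern. -/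
theorem stmt9_general (p : ℕ) (a : List ℕ) (h : IsPAsc p a) (hav : Avoids012 a) :
    ∀ i : Fin a.length, a.get i ≤ p := by
  obtain ⟨hhead, hbound⟩ := h
  rintro ⟨n, hn⟩
  induction n using Nat.strong_induction_on with
  | _ n IH =>
    rcases Nat.eq_zero_or_pos n with rfl | hpos
    · have ha₀ : a[0] = 0 := by simpa [List.head?_eq_getElem?, hn] using hhead
      simp [ha₀]
    by_contra! hgt
    have hasc : 0 < ascN (a.take n) := by
      have := hbound ⟨n, hn⟩ hpos
      simp only [List.get_eq_getElem] at this hgt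
      omega
    obtain ⟨j, hj, hlt⟩ := exists_getElem_lt_getElem_succ_of_ascN_pos hasc
    rw [List.length_take_of_le hn.le] at hj
    simp only [List.getElem_take] at hlt
    exact hav ⟨j, by omega⟩ ⟨j + 1, by omega⟩ ⟨n, hn⟩ (Fin.mk_lt_mk.mpr j.lt_succ_self) hj
      ⟨hlt, (IH (j + 1) hj (by omega)).trans_lt hgt⟩

theorem stmt9 (p : ℕ) (hp : 1 ≤ p) (a : List ℕ) (h : IsPAsc p a) (hav : Avoids012 a) :
    ∀ i : Fin a.length, a.get i ≤ p :=
  stmt9_general p a h hav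
end

section
/- For all n ≥ 4, the number of 3-ascent sequences of length n avoiding the pattern 012 equals 2^(n-4)·(n² + 5n + 2). -/
/-- Positive entries dominate all later entries. -/
def Ple (t : List ℕ) : Prop := t.Pairwise (fun u v => 0 < u → v ≤ u)

/-- Structural predicate: entries bounded by a running cap, which is lowered at
each positive entry. -/
def Rp (c : ℕ) : List ℕ → Prop
  | [] => True
  | x :: s => x ≤ c ∧ Rp (if x = 0 then c else x) s

lemma rp_iff (c : ℕ) (t : List ℕ) : Rp c t ↔ (∀ y ∈ t, y ≤ c) ∧ Ple t := by
  induction t generalizing c with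
  | nil => simp [Rp, Ple]
  | cons x s ih =>
    simp only [Rp, ih, Ple, List.pairwise_cons, List.mem_cons]
    constructor
    · rintro ⟨hx, hs, hp⟩
      refine ⟨?_, ?_, hp⟩
      · intro y hy
        rcases hy with rfl | hy
        · exact hx
        · have := hs y hy
          split at this <;> omega
      · intro y hy hx0
        have := hs y hy
        split at this <;> omega
    · rintro ⟨hb, hd, hp⟩
      refine ⟨hb x (Or.inl rfl), fun y hy => ?_, hp⟩
      have h1 := hb y (Or.inr hy)
      have h2 := hd y hy
      split <;> omega

lemma ascN_eq_zero {l : List ℕ} (h : ∀ x ∈ l, x = 0) : ascN l = 0 := by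
  rw [ascN, List.countP_eq_zero]
  rintro ⟨q1, q2⟩ hq
  have h1 := List.of_mem_zip hq
  have e1 := h q1 h1.1
  have e2 := h q2 (List.mem_of_mem_tail h1.2)
  simp [e1, e2]

lemma key (a : List ℕ) :
    (IsPAsc 3 a ∧ Avoids012 a) ↔
      ∃ t, a = 0 :: t ∧ (∀ y ∈ t, y ≤ 3) ∧ Ple t := by
  constructor
  · rintro ⟨⟨hh, hb⟩, hav⟩
    cases a with
    | nil => simp at hh
    | cons x t =>
      have hx : x = 0 := by simpa using hh
      subst hx
      have hdom : ∀ i j (hi : i < (0 :: t).length) (hj : j < (0 :: t).length),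
          i < j → 0 < (0 :: t)[i] → (0 :: t)[j] ≤ (0 :: t)[i] := by
        intro i j hi hj hij hpos
        have hi0 : 0 < i := by
          by_contra h
          interval_cases i
          simp at hpos
        have := hav ⟨0, by simp⟩ ⟨i, hi⟩ ⟨j, hj⟩ (by simpa [Fin.lt_def]) (by simpa [Fin.lt_def])
        simp only [List.get_eq_getElem] at this
        simp only [List.getElem_cons_zero] at this
        omega
      have hb3 : ∀ j (hj : j < (0 :: t).length), (0 :: t)[j] ≤ 3 := by
        intro j
        induction j using Nat.strong_induction_on with
        | _ j ih =>
          intro hj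
          rcases Nat.eq_zero_or_pos j with rfl | hj1
          · simp
          by_cases hex : ∃ i, ∃ (hi : i < j), 0 < (0 :: t)[i]
          · obtain ⟨i, hi, hpos⟩ := hex
            exact le_trans (hdom i j (lt_trans hi hj) hj hi hpos) (ih i hi (lt_trans hi hj))
          · push_neg at hex
            have h0 : ∀ x ∈ (0 :: t).take j, x = 0 := by
              intro x hx
              obtain ⟨k, hk, hkx⟩ := List.mem_iff_getElem.mp hx
              have hkj : k < j := by
                have := hk
                simp [List.length_take] at this
                omega
              rw [List.getElem_take] at hkx
              have := hex k hkj
              omega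
            have := hb ⟨j, hj⟩ hj1
            simp only [List.get_eq_getElem] at this
            rw [ascN_eq_zero h0] at this
            omega
      refine ⟨t, rfl, ?_, ?_⟩
      · intro y hy
        obtain ⟨k, hk, hky⟩ := List.mem_iff_getElem.mp hy
        have := hb3 (k + 1) (by simpa using Nat.succ_lt_succ hk)
        rwa [List.getElem_cons_succ, hky] at this
      · rw [Ple, List.pairwise_iff_getElem]
        intro i j hi hj hij hpos
        have := hdom (i + 1) (j + 1) (by simpa using Nat.succ_lt_succ hi)
          (by simpa using Nat.succ_lt_succ hj) (by omega)
        simp only [List.getElem_cons_succ] at this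
        exact this hpos
  · rintro ⟨t, rfl, hbd, hp⟩
    refine ⟨⟨rfl, ?_⟩, ?_⟩
    · rintro ⟨i, hi⟩ h1
      have h1' : 1 ≤ i := h1
      obtain ⟨k, rfl⟩ : ∃ k, i = k + 1 := ⟨i - 1, by omega⟩
      have hk : k < t.length := by simp at hi; omega
      simp only [List.get_eq_getElem, List.getElem_cons_succ]
      have : t[k] ≤ 3 := hbd _ (List.getElem_mem hk)
      omega
    · rintro ⟨i, hi⟩ ⟨j, hj⟩ ⟨k, hk⟩ hij hjk ⟨h1, h2⟩
      simp only [Fin.lt_def] at hij hjk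
      simp only [List.get_eq_getElem] at h1 h2
      have hj1 : 0 < j := by
        rcases Nat.eq_zero_or_pos j with rfl | h
        · omega
        · exact h
      have hk1 : 0 < k := by omega
      obtain ⟨j', rfl⟩ : ∃ j', j = j' + 1 := ⟨j - 1, by omega⟩
      obtain ⟨k', rfl⟩ : ∃ k', k = k' + 1 := ⟨k - 1, by omega⟩
      have hj' : j' < t.length := by simp at hj; omega
      have hk' : k' < t.length := by simp at hk; omega
      simp only [List.getElem_cons_succ] at h1 h2
      have hpw := List.pairwise_iff_getElem.mp hp j' k' hj' hk' (by omega)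
      have : 0 < t[j'] := by omega
      have := hpw this
      omega

/-- Finset of lists of length `m` satisfying `Rp c`. -/
def LFin : ℕ → ℕ → Finset (List ℕ)
  | 0, _ => {[]}
  | m + 1, c =>
      (Finset.range (c + 1)).biUnion fun x => (LFin m (if x = 0 then c else x)).image (x :: ·)

lemma mem_LFin (m c : ℕ) (a : List ℕ) : a ∈ LFin m c ↔ a.length = m ∧ Rp c a := by
  induction m generalizing c a with
  | zero =>
    cases a <;> simp [LFin, Rp]
  | succ m ih =>
    cases a with
    | nil => simp [LFin]
    | cons x s =>
      simp only [LFin, Finset.mem_biUnion, Finset.mem_range, Finset.mem_image, Rp,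
        List.length_cons]
      constructor
      · rintro ⟨y, hy, t, ht, het⟩
        obtain ⟨rfl, rfl⟩ : y = x ∧ t = s := by
          refine ⟨?_, ?_⟩ <;> injection het
        have := (ih _ t).mp ht
        exact ⟨by omega, by omega, this.2⟩
      · rintro ⟨hl, hx, hr⟩
        exact ⟨x, by omega, s, (ih _ s).mpr ⟨by omega, hr⟩, rfl⟩

lemma card_LFin_succ (m c : ℕ) :
    (LFin (m + 1) c).card = ∑ x ∈ Finset.range (c + 1), (LFin m (if x = 0 then c else x)).card := by
  rw [LFin, Finset.card_biUnion]
  · refine Finset.sum_congr rfl fun x _ => ?_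
    exact Finset.card_image_of_injective _ fun a b h => by injection h
  · intro x _ y _ hxy
    simp only [Finset.disjoint_left, Finset.mem_image]
    rintro a ⟨t, _, rfl⟩ ⟨u, _, heq⟩
    exact hxy (by injection heq; simp_all)

lemma card_LFin_one (m : ℕ) : (LFin m 1).card = 2 ^ m := by
  induction m with
  | zero => simp [LFin]
  | succ m ih =>
    rw [card_LFin_succ]
    simp [Finset.sum_range_succ, ih]
    ring

lemma card_LFin_two (m : ℕ) : (LFin (m + 1) 2).card = 2 ^ m * (m + 3) := by
  induction m with
  | zero =>
    rw [card_LFin_succ]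
    simp [Finset.sum_range_succ, LFin]
  | succ m ih =>
    rw [card_LFin_succ]
    simp only [Finset.sum_range_succ, Finset.sum_range_zero]
    norm_num [ih, card_LFin_one]
    ring

lemma card_LFin_three (k : ℕ) : (LFin (k + 3) 3).card = 2 ^ k * (k ^ 2 + 13 * k + 38) := by
  induction k with
  | zero =>
    have h1 : (LFin 1 3).card = 4 := by
      rw [card_LFin_succ]
      simp [Finset.sum_range_succ, LFin]
    have h2 : (LFin 2 3).card = 13 := by
      rw [card_LFin_succ]
      simp only [Finset.sum_range_succ, Finset.sum_range_zero]
      norm_num [h1, card_LFin_one, card_LFin_two]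
    rw [card_LFin_succ]
    simp only [Finset.sum_range_succ, Finset.sum_range_zero]
    norm_num [h2, card_LFin_one, card_LFin_two]
  | succ k ih =>
    rw [card_LFin_succ]
    simp only [Finset.sum_range_succ, Finset.sum_range_zero]
    norm_num [ih, card_LFin_one, card_LFin_two]
    ring

theorem stmt12 (n : ℕ) (hn : 4 ≤ n) :
    Set.ncard {a : List ℕ | a.length = n ∧ IsPAsc 3 a ∧ Avoids012 a} =
      2 ^ (n - 4) * (n ^ 2 + 5 * n + 2) := by
  obtain ⟨k, rfl⟩ : ∃ k, n = k + 4 := ⟨n - 4, by omega⟩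
  have hset : {a : List ℕ | a.length = k + 4 ∧ IsPAsc 3 a ∧ Avoids012 a}
      = ↑((LFin (k + 3) 3).image (0 :: ·)) := by
    ext a
    simp only [Set.mem_setOf_eq, Finset.coe_image, Set.mem_image, Finset.mem_coe, mem_LFin,
      rp_iff]
    constructor
    · rintro ⟨hlen, hpa⟩
      obtain ⟨t, rfl, hb, hp⟩ := (key a).mp hpa
      exact ⟨t, ⟨by simpa using hlen, hb, hp⟩, rfl⟩
    · rintro ⟨t, ⟨hlen, hb, hp⟩, rfl⟩
      exact ⟨by simp [hlen], (key _).mpr ⟨t, rfl, hb, hp⟩⟩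
  rw [hset, Set.ncard_coe_finset,
    Finset.card_image_of_injective _ (fun a b h => by injection h),
    card_LFin_three]
  have : k + 4 - 4 = k := by omega
  rw [this]
  ring
end
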